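/- For a map Φ_f on the set of nonexpansive maps CMS(Y,X) defined by Φ_f(m) = f ∘ (p_X × id_Y) ∘ ⟨m, id_Y⟩ where f : ▷_r X × Y → X is nonexpansive, Φ_f is an r-contraction with respect to the sup metric: d(Φ_f(m), Φ_f(n)) ≤ r · d(m,n) for all nonexpansive m, n : Y → X. -/
import Mathlib


/-- The operator `Φ_f(m) = f ∘ (p_X × id_Y) ∘ ⟨m, id_Y⟩` on nonexpansive maps `Y → X`
is an `r`-contraction w.r.t. the sup metric: `d(Φ_f m, Φ_f n) ≤ r · d(m, n)`. Here `X`,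
`Y` are 1-bounded metric spaces, `▷_r X` is `X` with metric scaled by `r ∈ (0,1)`, and
`f : ▷_r X × Y → X` is nonexpansive w.r.t. the max metric on the product. -/
theorem stmt2 {X Y : Type*} [MetricSpace X] [MetricSpace Y]
    (hX : ∀ a b : X, dist a b ≤ 1) (hY : ∀ a b : Y, dist a b ≤ 1)
    (r : ℝ) (hr0 : 0 < r) (hr1 : r < 1)
    (f : X × Y → X)
    (hf : ∀ p q : X × Y, dist (f p) (f q) ≤ max (r * dist p.1 q.1) (dist p.2 q.2))
    (m n : Y → X) (hm : LipschitzWith 1 m) (hn : LipschitzWith 1 n) :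
    (⨆ y : Y, dist (f (m y, y)) (f (n y, y))) ≤ r * ⨆ y : Y, dist (m y) (n y) := by
  have hbdd : BddAbove (Set.range fun y : Y => dist (m y) (n y)) :=
    ⟨1, by rintro _ ⟨y, rfl⟩; exact hX _ _⟩
  have hsup0 : 0 ≤ ⨆ y : Y, dist (m y) (n y) :=
    Real.iSup_nonneg fun y => dist_nonneg
  refine Real.iSup_le (fun y => ?_) (by positivity)
  have h := hf (m y, y) (n y, y)
  simp only [dist_self, max_eq_left (by positivity : (0:ℝ) ≤ r * dist (m y) (n y))] at h
  exact h.trans (mul_le_mul_of_nonneg_left (le_ciSup hbdd y) hr0.le)
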